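/- arXiv:2407.02326 — 2 statements merged into one kernel-verified Lean document; each statement's English description precedes it below -/
import Mathlib

section
/- For every deterministic finite automaton M over the alphabet {0,1}, the linguage 𝐋(M) is a finite description linear order. -/
/-- A deterministic finite automaton with a partial transition function. -/
structure PDFA (σ : Type) where
  /-- the (finite) set of states -/
  State : Type
  finState : Finite State
  /-- the start state -/
  start : State
  /-- the set of accept states -/
  accept : Set State
  /-- the partial transition function -/
  step : State → σ → Option State

namespace PDFA

variable {σ : Type} (M : PDFA σ)

/-- The extended (partial) transition function `δ̂`, reading the word left to right. -/
def run (q : M.State) (w : List σ) : Option M.State :=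
  w.foldlM (fun q a => M.step q a) q

/-- The language accepted by the automaton. -/
def lang : Set (List σ) := {w | ∃ q ∈ M.accept, M.run M.start w = some q}

end PDFA

/-- The inorder relation `<₂` on finite binary words: `x <₂ y` iff, writing
`x = w·x'`, `y = w·y'` with `w` the longest common prefix, either `x'` begins
with `0`(=`false`) or `y'` begins with `1`(=`true`). -/
def inlt : List Bool → List Bool → Prop
  | [], [] => False
  | [], b :: _ => b = true
  | a :: _, [] => a = false
  | a :: x, b :: y => (a = false ∧ b = true) ∨ (a = b ∧ inlt x y)

/-- The class of finite description linear orders, as a predicate on pairs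
`(L, r)` of a type and a binary relation: the smallest class containing the
empty and one-element orders and closed under order isomorphism, binary sums,
multiplication by `ω`, multiplication by `ω*`, and finitary shuffles. -/
inductive FinDesc : (L : Type) → (L → L → Prop) → Prop
  | empty : FinDesc Empty (fun _ _ => False)
  | single : FinDesc PUnit (fun _ _ => False)
  | iso (L : Type) (r : L → L → Prop) (L' : Type) (r' : L' → L' → Prop) :
      FinDesc L r → Nonempty (r' ≃r r) → FinDesc L' r'
  | sum (L₀ : Type) (r₀ : L₀ → L₀ → Prop) (L₁ : Type) (r₁ : L₁ → L₁ → Prop) :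
      FinDesc L₀ r₀ → FinDesc L₁ r₁ → FinDesc (L₀ ⊕ L₁) (Sum.Lex r₀ r₁)
  | omegaMul (L : Type) (r : L → L → Prop) :
      FinDesc L r → FinDesc (ℕ × L) (Prod.Lex (· < ·) r)
  | omegaStarMul (L : Type) (r : L → L → Prop) :
      FinDesc L r → FinDesc (ℕ × L) (Prod.Lex (fun m n : ℕ => n < m) r)
  | shuffle (n : ℕ) (hn : 1 ≤ n) (L : Fin n → Type) (r : ∀ i, L i → L i → Prop)
      (χ : ℚ → Fin n)
      (hχ : ∀ i, ∀ a b : ℚ, a < b → ∃ q, a < q ∧ q < b ∧ χ q = i) :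
      (∀ i, FinDesc (L i) (r i)) →
      FinDesc ((q : ℚ) × L (χ q)) (Sigma.Lex (· < ·) (fun q => r (χ q)))

/-!
Induction on the number of states reachable from `s`. If `s` lies on no cycle, then
`L(s) = 0·L(s₀) + ε + 1·L(s₁)` for its children `s₀, s₁`, from which fewer states are reachable.

Otherwise let `C` be the strongly connected component of `s`; every state of `C` has a child in `C`.
A word of `L(s)` runs inside `C` and then either ends or steps out of `C` to a state whose language
is known by induction. The left spine (stay in `C`, by `0` whenever possible) is eventually
periodic, so the words leaving it to the left form a finite sum followed by an `ω`-sum of known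
pieces; symmetrically the right spine gives an `ω*`-sum. Every other word is `v ++ b :: u`, where
`v` leads to a branching state `q` (both children in `C`) and `u` follows the spine of the `b`-child
of `q` that turns back towards `q`. Since any state of `C` can be reached from any other, the
prefixes `v` form a countable dense order without endpoints in which every branching state occurs
densely, so these words form a shuffle of finitely many known orders.
-/

@[simp] lemma inlt_nil_nil : inlt [] [] ↔ False := Iff.rfl
@[simp] lemma inlt_nil_cons {b : Bool} {y : List Bool} : inlt [] (b :: y) ↔ b = true := Iff.rfl
@[simp] lemma inlt_cons_nil {a : Bool} {x : List Bool} : inlt (a :: x) [] ↔ a = false := Iff.rfl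
@[simp] lemma inlt_cons_cons {a b : Bool} {x y : List Bool} :
    inlt (a :: x) (b :: y) ↔ (a = false ∧ b = true) ∨ (a = b ∧ inlt x y) := Iff.rfl

lemma inlt_irrefl (x : List Bool) : ¬ inlt x x := by
  induction x <;> simp_all

lemma inlt_trans {x y z : List Bool} (hxy : inlt x y) (hyz : inlt y z) : inlt x z := by
  induction x generalizing y z with
  | nil => cases y <;> cases z <;> simp_all
  | cons a x ih =>
    cases y <;> cases z <;> simp at hxy hyz ⊢
    all_goals grind

lemma inlt_trichotomous (x y : List Bool) : inlt x y ∨ x = y ∨ inlt y x := by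
  induction x generalizing y with
  | nil => rcases y with _ | ⟨_ | _, _⟩ <;> simp
  | cons a x ih => rcases y with _ | ⟨b, y⟩ <;> cases a <;> simp <;> grind

instance : IsStrictTotalOrder (List Bool) inlt where
  irrefl := inlt_irrefl
  trans _ _ _ := inlt_trans
  trichotomous x y hxy hyx := by have := inlt_trichotomous x y; tauto

lemma inlt_append_left_iff (w : List Bool) {x y : List Bool} :
    inlt (w ++ x) (w ++ y) ↔ inlt x y := by
  induction w <;> simp_all

lemma inlt_append_true (w t : List Bool) : inlt w (w ++ true :: t) := by
  simpa using (inlt_append_left_iff w (x := [])).2 (inlt_nil_cons.2 rfl)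

lemma inlt_append_false (w t : List Bool) : inlt (w ++ false :: t) w := by
  simpa using (inlt_append_left_iff w (y := [])).2 (inlt_cons_nil.2 rfl)

lemma inlt_exists_extension_between {x y : List Bool} (h : inlt x y) :
    ∃ c, (c = x ∨ c = y) ∧ ∃ b, ∀ t, inlt x (c ++ b :: t) ∧ inlt (c ++ b :: t) y := by
  induction x generalizing y with
  | nil =>
    rcases y with _ | ⟨b, y⟩
    · simp at h
    · simp only [inlt_nil_cons] at h
      subst h
      exact ⟨_, Or.inr rfl, false, fun t => ⟨by simp, inlt_append_false _ t⟩⟩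
  | cons a x ih =>
    rcases y with _ | ⟨b, y⟩
    · simp only [inlt_cons_nil] at h
      subst h
      exact ⟨_, Or.inl rfl, true, fun t => ⟨inlt_append_true _ t, by simp⟩⟩
    · rcases h with ⟨rfl, rfl⟩ | ⟨rfl, h⟩
      · exact ⟨_, Or.inl rfl, true, fun t => ⟨inlt_append_true _ t, by simp⟩⟩
      · obtain ⟨c, hc, b, hcb⟩ := ih h
        exact ⟨a :: c, by rcases hc with rfl | rfl <;> simp, b, fun t => by simpa using hcb t⟩

/-- A copy of `List Bool` ordered by `<₂`: `List Bool` itself carries the lexicographic order. -/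
def InorderWord : Type := List Bool

noncomputable instance : LinearOrder InorderWord := by
  classical exact (linearOrderOfSTO inlt : LinearOrder (List Bool))

instance : Countable InorderWord := inferInstanceAs (Countable (List Bool))

/-- `x` lies strictly on side `d` of `y`. -/
def inltTo : Bool → List Bool → List Bool → Prop
  | false, x, y => inlt x y
  | true, x, y => inlt y x

@[simp] lemma inltTo_false {x y : List Bool} : inltTo false x y ↔ inlt x y := Iff.rfl
@[simp] lemma inltTo_true {x y : List Bool} : inltTo true x y ↔ inlt y x := Iff.rfl

lemma inltTo_of_head?_eq (d : Bool) {x y : List Bool} (hx : x.head? = some d)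
    (hy : y.head? ≠ some d) : inltTo d x y := by
  rcases x with _ | ⟨a, x⟩ <;> rcases y with _ | ⟨b, y⟩ <;> cases d <;> simp_all

lemma inltTo_of_head?_eq_not (d : Bool) {x y : List Bool} (hx : x.head? ≠ some !d)
    (hy : y.head? = some !d) : inltTo d x y := by
  rcases x with _ | ⟨a, x⟩ <;> rcases y with _ | ⟨b, y⟩ <;> cases d <;> simp_all

lemma inltTo_append_left_iff (d : Bool) (w : List Bool) {x y : List Bool} :
    inltTo d (w ++ x) (w ++ y) ↔ inltTo d x y := by
  cases d <;> exact inlt_append_left_iff w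

@[simp] lemma inltTo_cons_cons_iff (d b : Bool) {x y : List Bool} :
    inltTo d (b :: x) (b :: y) ↔ inltTo d x y :=
  inltTo_append_left_iff d [b]

lemma List.flatten_replicate_of_lt {α : Type*} (π : List α) {m m' : ℕ} (h : m < m') :
    (List.replicate m' π).flatten =
      (List.replicate m π).flatten ++ (π ++ (List.replicate (m' - m - 1) π).flatten) := by
  obtain ⟨k, rfl⟩ := Nat.exists_eq_add_of_lt h
  rw [show m + k + 1 = m + (k + 1) by omega, List.replicate_add, List.flatten_append,
    List.replicate_succ, List.flatten_cons]
  simp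

def FinDescLang (S : Set (List Bool)) : Prop :=
  FinDesc S (fun x y => inlt x.1 y.1)

instance (S : Set (List Bool)) : IsStrictTotalOrder S (fun x y => inlt x.1 y.1) where
  irrefl x := inlt_irrefl x.1
  trans _ _ _ := inlt_trans
  trichotomous x y hxy hyx := by
    have := inlt_trichotomous x.1 y.1; exact Subtype.ext (by tauto)

namespace FinDescLang

lemma congr {S T : Set (List Bool)} (h : FinDescLang S) (hST : S = T) : FinDescLang T := hST ▸ h

/-- No injectivity is needed: `f` is injective since `r` is trichotomous and `inlt` irreflexive. -/
lemma of_range {L : Type} {r : L → L → Prop} [Std.Trichotomous r] (h : FinDesc L r)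
    (f : L → List Bool) (hf : ∀ a b, r a b → inlt (f a) (f b)) : FinDescLang (Set.range f) :=
  FinDesc.iso _ _ _ _ h
    ⟨(RelIso.ofSurjective (RelEmbedding.ofMonotone (Set.rangeFactorization f) hf)
      Set.rangeFactorization_surjective).symm⟩

lemma of_eq_empty {S : Set (List Bool)} (h : S = ∅) : FinDescLang S := by
  convert of_range FinDesc.empty Empty.elim (fun a => a.elim)
  rw [h, Set.range_eq_empty]

lemma singleton (w : List Bool) : FinDescLang {w} := by
  simpa using of_range FinDesc.single (fun _ => w) (fun _ _ h => h.elim)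

lemma of_subset_singleton {S : Set (List Bool)} {w : List Bool} (h : S ⊆ {w}) :
    FinDescLang S := by
  rcases (Set.subset_singleton_iff_eq.1 h) with rfl | rfl
  · exact of_eq_empty rfl
  · exact singleton w

lemma union {S T : Set (List Bool)} (hS : FinDescLang S) (hT : FinDescLang T)
    (hST : ∀ x ∈ S, ∀ y ∈ T, inlt x y) : FinDescLang (S ∪ T) := by
  convert of_range (FinDesc.sum _ _ _ _ hS hT) (Sum.elim Subtype.val Subtype.val) ?_
  · simp [Set.Sum.elim_range]
  · intro a b h
    cases h with
    | inl h => exact h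
    | inr h => exact h
    | sep x y => exact hST x.1 x.2 y.1 y.2

lemma union_to (d : Bool) {S T : Set (List Bool)} (hS : FinDescLang S) (hT : FinDescLang T)
    (hST : ∀ x ∈ S, ∀ y ∈ T, inltTo d x y) : FinDescLang (S ∪ T) := by
  cases d
  · exact union hS hT hST
  · rw [Set.union_comm]
    exact union hT hS fun y hy x hx => hST x hx y hy

lemma image_append (p : List Bool) {S : Set (List Bool)} (h : FinDescLang S) :
    FinDescLang ((p ++ ·) '' S) := by
  convert of_range h (fun x => p ++ x.1) fun _ _ hxy => (inlt_append_left_iff p).2 hxy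
  ext; simp

/-- Prefixing `0, 1, 2, …` copies of `π` to `P` gives `P·ω` when `P` lies left of every word
starting with `π` (`d = false`), and `P·ω*` when it lies right of them (`d = true`). -/
lemma iterate (d : Bool) (π : List Bool) {P : Set (List Bool)} (hP : FinDescLang P)
    (hπ : ∀ v ∈ P, ∀ y, inltTo d v (π ++ y)) :
    FinDescLang {w | ∃ m, ∃ v ∈ P, w = (List.replicate m π).flatten ++ v} := by
  let f : ℕ × P → List Bool := fun mv => (List.replicate mv.1 π).flatten ++ mv.2.1
  have hrange : Set.range f = {w | ∃ m, ∃ v ∈ P, w = (List.replicate m π).flatten ++ v} := by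
    ext w; simp [f, eq_comm]
  have hcopies : ∀ m m' (v v' : P), m < m' → inltTo d (f (m, v)) (f (m', v')) := by
    intro m m' v v' h
    have := hπ v v.2 ((List.replicate (m' - m - 1) π).flatten ++ v')
    cases d <;>
    simpa [f, List.flatten_replicate_of_lt π h, inlt_append_left_iff] using this
  have hsame : ∀ m (v v' : P), inlt v.1 v'.1 → inlt (f (m, v)) (f (m, v')) :=
    fun m _ _ h => (inlt_append_left_iff _).2 h
  rw [← hrange]
  cases d
  · refine of_range (FinDesc.omegaMul _ _ hP) f ?_
    rintro ⟨m, v⟩ ⟨m', v'⟩ (⟨_, _, h⟩ | ⟨_, h⟩)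
    exacts [hcopies _ _ _ _ h, hsame _ _ _ h]
  · refine of_range (FinDesc.omegaStarMul _ _ hP) f ?_
    rintro ⟨m, v⟩ ⟨m', v'⟩ (⟨_, _, h⟩ | ⟨_, h⟩)
    exacts [hcopies _ _ _ _ h, hsame _ _ _ h]

/-- The shuffle `Ξ (K i)ᵢ`, realised on the words `emb j ++ k` with `k ∈ K (c j)`. -/
lemma shuffle {ι : Type} [Finite ι] (K : ι → Set (List Bool)) (hK : ∀ i, FinDescLang (K i))
    {J : Type} [LinearOrder J] [Countable J] [DenselyOrdered J] [NoMinOrder J] [NoMaxOrder J]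
    [Nonempty J] (c : J → ι) (hc : ∀ i, ∀ a b : J, a < b → ∃ m, a < m ∧ m < b ∧ c m = i)
    (emb : J → List Bool)
    (hemb : ∀ a b, a < b → ∀ k ∈ K (c a), ∀ k' ∈ K (c b), inlt (emb a ++ k) (emb b ++ k')) :
    FinDescLang {w | ∃ j, ∃ k ∈ K (c j), w = emb j ++ k} := by
  obtain ⟨ψ⟩ := Order.iso_of_countable_dense ℚ J
  obtain ⟨n, ⟨e⟩⟩ := Finite.exists_equiv_fin ι
  have hn : 1 ≤ n := Fin.pos (e (c (Classical.arbitrary J)))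
  have hχ : ∀ j, ∀ a b : ℚ, a < b → ∃ q, a < q ∧ q < b ∧ e (c (ψ q)) = j := by
    intro j a b hab
    obtain ⟨m, h₁, h₂, hm⟩ := hc (e.symm j) (ψ a) (ψ b) (ψ.lt_iff_lt.2 hab)
    exact ⟨ψ.symm m, by simpa using ψ.symm.lt_iff_lt.2 h₁, by simpa using ψ.symm.lt_iff_lt.2 h₂,
      by simp [hm]⟩
  have base := FinDesc.shuffle n hn (fun j => K (e.symm j)) (fun _ x y => inlt x.1 y.1)
    (fun q => e (c (ψ q))) hχ fun j => hK _
  convert of_range base (fun qk => emb (ψ qk.1) ++ qk.2.1) ?_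
  · ext w
    constructor
    · rintro ⟨j, k, hk, rfl⟩
      exact ⟨⟨ψ.symm j, k, by simpa using hk⟩, by simp⟩
    · rintro ⟨⟨q, k, hk⟩, rfl⟩
      exact ⟨ψ q, k, by simpa using hk, rfl⟩
  · rintro ⟨q, k, hk⟩ ⟨q', k', hk'⟩ (⟨_, _, h⟩ | ⟨_, _, h⟩)
    · exact hemb _ _ (ψ.lt_iff_lt.2 h) _ (by simpa using hk) _ (by simpa using hk')
    · exact (inlt_append_left_iff _).2 h

end FinDescLang

namespace PDFA

variable {M : PDFA Bool}

variable (M) in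
def langFrom (s : M.State) : Set (List Bool) := {w | ∃ q ∈ M.accept, M.run s w = some q}

variable (M) in
def reach (s : M.State) : Set M.State := {p | ∃ w, M.run s w = some p}

@[simp] lemma run_nil (s : M.State) : M.run s [] = some s := rfl

@[simp] lemma run_cons (s : M.State) (a : Bool) (w : List Bool) :
    M.run s (a :: w) = (M.step s a).bind (M.run · w) := by
  simp [PDFA.run]

lemma run_append (s : M.State) (u v : List Bool) :
    M.run s (u ++ v) = (M.run s u).bind (M.run · v) := by
  simp [PDFA.run]

@[simp] lemma cons_mem_langFrom {p : M.State} {a : Bool} {w : List Bool} :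
    a :: w ∈ M.langFrom p ↔ ∃ r, M.step p a = some r ∧ w ∈ M.langFrom r := by
  simp only [langFrom, Set.mem_ofPred_eq, run_cons]
  cases M.step p a <;> simp

lemma append_mem_langFrom {p q : M.State} {v w : List Bool} (hv : M.run p v = some q) :
    v ++ w ∈ M.langFrom p ↔ w ∈ M.langFrom q := by
  simp [langFrom, run_append, hv]

lemma mem_reach_self (s : M.State) : s ∈ M.reach s := ⟨[], rfl⟩

lemma mem_reach_trans {s p r : M.State} (hp : p ∈ M.reach s) (hr : r ∈ M.reach p) :
    r ∈ M.reach s := by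
  obtain ⟨u, hu⟩ := hp
  obtain ⟨v, hv⟩ := hr
  exact ⟨u ++ v, by simp [run_append, hu, hv]⟩

lemma mem_reach_of_step {s p : M.State} {a : Bool} (h : M.step s a = some p) : p ∈ M.reach s :=
  ⟨[a], by simp [h]⟩

lemma ncard_reach_lt {s r : M.State} (hr : r ∈ M.reach s) (hs : s ∉ M.reach r) :
    (M.reach r).ncard < (M.reach s).ncard := by
  have := M.finState
  refine Set.ncard_lt_ncard ⟨fun p hp => mem_reach_trans hr hp, fun h => hs ?_⟩
  exact h (mem_reach_self s)

lemma finDescLang_langFrom_head?_eq (p : M.State) (b : Bool)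
    (h : ∀ r, M.step p b = some r → FinDescLang (M.langFrom r)) :
    FinDescLang {w ∈ M.langFrom p | w.head? = some b} := by
  cases hstep : M.step p b with
  | none =>
    refine .of_eq_empty (Set.eq_empty_of_forall_notMem ?_)
    rintro (_ | ⟨a, w⟩) ⟨hw, ha⟩
    · simp at ha
    · obtain rfl : a = b := by simpa using ha
      obtain ⟨r, hr, -⟩ := cons_mem_langFrom.1 hw
      simp [hstep] at hr
  | some r =>
    refine (FinDescLang.image_append [b] (h r hstep)).congr ?_
    ext (_ | ⟨a, w⟩)
    · simp
    · simp only [Set.mem_image, List.singleton_append, List.cons.injEq, Set.mem_ofPred_eq,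
        List.head?_cons, Option.some.injEq, cons_mem_langFrom]
      constructor
      · rintro ⟨w, hw, rfl, rfl⟩
        exact ⟨⟨r, hstep, hw⟩, rfl⟩
      · rintro ⟨⟨r', hr', hw⟩, rfl⟩
        cases hstep.symm.trans hr'
        exact ⟨w, hw, rfl, rfl⟩

/-- Splits as `0·L(p₀) + ε + 1·L(p₁)`. -/
lemma finDescLang_of_children (p : M.State) (P : Bool → Prop)
    (h : ∀ b r, P b → M.step p b = some r → FinDescLang (M.langFrom r)) :
    FinDescLang {w ∈ M.langFrom p | ∀ b w', w = b :: w' → P b} := by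
  have hchild : ∀ b, FinDescLang {w ∈ M.langFrom p | w.head? = some b ∧ P b} := fun b => by
    by_cases hb : P b
    · simpa [hb] using finDescLang_langFrom_head?_eq p b fun r => h b r hb
    · exact .of_eq_empty (by ext; simp [hb])
  have hnil : FinDescLang {w ∈ M.langFrom p | w = []} :=
    .of_subset_singleton fun w hw => hw.2
  refine ((hchild false).union ((hnil.union (hchild true) ?_)) ?_).congr ?_
  · rintro _ ⟨-, rfl⟩ y ⟨-, hy, -⟩
    exact inltTo_of_head?_eq_not false (by simp) hy
  · rintro x ⟨-, hx, -⟩ y (⟨-, rfl⟩ | ⟨-, hy, -⟩)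
    · exact inltTo_of_head?_eq false hx (by simp)
    · exact inltTo_of_head?_eq false hx (by simp [hy])
  · ext (_ | ⟨_ | _, w⟩) <;> simp +contextual

section Component

open scoped Classical

variable (M) (s₀ : M.State)

def IsCyclic : Prop := ∃ w ≠ [], M.run s₀ w = some s₀

def scc : Set M.State := {p | p ∈ M.reach s₀ ∧ s₀ ∈ M.reach p}

def ChildIn (p : M.State) (b : Bool) : Prop := ∃ r ∈ M.scc s₀, M.step p b = some r

def IsBranching (p : M.State) : Prop := ∀ b, M.ChildIn s₀ p b

/-- `p` itself is a junk value when `p` has no `b`-child in the component. -/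
noncomputable def child (p : M.State) (b : Bool) : M.State :=
  if h : M.ChildIn s₀ p b then h.choose else p

def exitLang (p : M.State) : Set (List Bool) :=
  {w ∈ M.langFrom p | ∀ b w', w = b :: w' → ¬ M.ChildIn s₀ p b}

/-- The spine in direction `d` stays in the component, preferring the letter `d`. -/
noncomputable def spineLetter (d : Bool) (p : M.State) : Bool :=
  if M.ChildIn s₀ p d then d else !d

noncomputable def spineNext (d : Bool) (p : M.State) : M.State :=
  M.child s₀ p (M.spineLetter s₀ d p)

noncomputable def spinePath (d : Bool) : M.State → ℕ → List Bool
  | _, 0 => []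
  | p, t + 1 => M.spineLetter s₀ d p :: spinePath d (M.spineNext s₀ d p) t

def spineBlock (d : Bool) (p : M.State) : Set (List Bool) :=
  {w ∈ M.exitLang s₀ p | ¬ M.ChildIn s₀ p d}

def spineAt (d : Bool) (p : M.State) (t : ℕ) : Set (List Bool) :=
  (M.spinePath s₀ d p t ++ ·) '' M.spineBlock s₀ d ((M.spineNext s₀ d)^[t] p)

def spineLang (d : Bool) (p : M.State) : Set (List Bool) := ⋃ t, M.spineAt s₀ d p t

def nodeLang (q : M.State) : Set (List Bool) :=
  M.exitLang s₀ q ∪ ⋃ b, (b :: ·) '' M.spineLang s₀ (!b) (M.child s₀ q b)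

def midLang (p : M.State) : Set (List Bool) :=
  {w | ∃ v q, M.run p v = some q ∧ q ∈ M.scc s₀ ∧ M.IsBranching s₀ q ∧
    ∃ k ∈ M.nodeLang s₀ q, w = v ++ k}

end Component

variable {s₀ p q r : M.State} {b d : Bool}

lemma mem_scc_self : s₀ ∈ M.scc s₀ := ⟨mem_reach_self s₀, mem_reach_self s₀⟩

lemma mem_scc_of_step (hp : p ∈ M.scc s₀) (hstep : M.step p b = some r) {v : List Bool}
    (hrun : M.run r v = some q) (hq : q ∈ M.scc s₀) : r ∈ M.scc s₀ :=
  ⟨mem_reach_trans hp.1 (mem_reach_of_step hstep), mem_reach_trans ⟨v, hrun⟩ hq.2⟩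

lemma exists_run_of_mem_scc (hp : p ∈ M.scc s₀) (hq : q ∈ M.scc s₀) :
    ∃ v, M.run p v = some q :=
  mem_reach_trans hp.2 hq.1

lemma childIn_of_step (h : M.step p b = some r) (hr : r ∈ M.scc s₀) : M.ChildIn s₀ p b :=
  ⟨r, hr, h⟩

lemma ChildIn.step_child (h : M.ChildIn s₀ p b) : M.step p b = some (M.child s₀ p b) := by
  rw [child, dif_pos h]
  exact h.choose_spec.2

lemma ChildIn.child_mem (h : M.ChildIn s₀ p b) : M.child s₀ p b ∈ M.scc s₀ := by
  rw [child, dif_pos h]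
  exact h.choose_spec.1

lemma child_eq_of_step (h : M.step p b = some r) (hr : r ∈ M.scc s₀) : M.child s₀ p b = r :=
  Option.some.inj ((childIn_of_step h hr).step_child.symm.trans h)

lemma IsCyclic.exists_childIn (hcyc : M.IsCyclic s₀) (hp : p ∈ M.scc s₀) :
    ∃ b, M.ChildIn s₀ p b := by
  obtain ⟨_ | ⟨b, w⟩, hw, hrun⟩ : ∃ w ≠ [], M.run p w = some s₀ := by
    obtain ⟨_ | ⟨b, w⟩, hrun⟩ := hp.2
    · cases hrun
      exact hcyc
    · exact ⟨_, List.cons_ne_nil b w, hrun⟩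
  · exact absurd rfl hw
  · simp only [run_cons, Option.bind_eq_some_iff] at hrun
    obtain ⟨r, hstep, hrun⟩ := hrun
    exact ⟨b, childIn_of_step hstep (mem_scc_of_step hp hstep hrun mem_scc_self)⟩

lemma IsCyclic.childIn_not_of_not (hcyc : M.IsCyclic s₀) (hp : p ∈ M.scc s₀)
    (h : ¬ M.ChildIn s₀ p d) : M.ChildIn s₀ p (!d) := by
  obtain ⟨b, hb⟩ := hcyc.exists_childIn hp
  cases b <;> cases d <;> simp_all

lemma spineLetter_of_childIn (h : M.ChildIn s₀ p d) : M.spineLetter s₀ d p = d := by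
  rw [spineLetter, if_pos h]

lemma spineLetter_of_not_childIn (h : ¬ M.ChildIn s₀ p d) : M.spineLetter s₀ d p = !d := by
  rw [spineLetter, if_neg h]

lemma spineLetter_eq_or (hb : M.ChildIn s₀ p b) :
    M.spineLetter s₀ d p = b ∨ (M.ChildIn s₀ p d ∧ b = !d) := by
  by_cases hd : M.ChildIn s₀ p d
  · rw [spineLetter_of_childIn hd]
    cases b <;> cases d <;> simp_all
  · rw [spineLetter_of_not_childIn hd]
    cases b <;> cases d <;> simp_all

lemma spineNext_of_childIn (h : M.ChildIn s₀ p d) : M.spineNext s₀ d p = M.child s₀ p d := by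
  rw [spineNext, spineLetter_of_childIn h]

lemma IsCyclic.childIn_spineLetter (hcyc : M.IsCyclic s₀) (hp : p ∈ M.scc s₀) :
    M.ChildIn s₀ p (M.spineLetter s₀ d p) := by
  by_cases hd : M.ChildIn s₀ p d
  · rwa [spineLetter_of_childIn hd]
  · rw [spineLetter_of_not_childIn hd]
    exact hcyc.childIn_not_of_not hp hd

lemma IsCyclic.step_spineLetter (hcyc : M.IsCyclic s₀) (hp : p ∈ M.scc s₀) :
    M.step p (M.spineLetter s₀ d p) = some (M.spineNext s₀ d p) :=
  (hcyc.childIn_spineLetter hp).step_child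

lemma IsCyclic.spineNext_mem (hcyc : M.IsCyclic s₀) (hp : p ∈ M.scc s₀) :
    M.spineNext s₀ d p ∈ M.scc s₀ :=
  (hcyc.childIn_spineLetter hp).child_mem

lemma IsCyclic.iterate_spineNext_mem (hcyc : M.IsCyclic s₀) (hp : p ∈ M.scc s₀) (t : ℕ) :
    (M.spineNext s₀ d)^[t] p ∈ M.scc s₀ := by
  induction t generalizing p with
  | zero => exact hp
  | succ t ih => exact ih (hcyc.spineNext_mem hp)

lemma IsCyclic.head?_ne_of_mem_spineBlock (hcyc : M.IsCyclic s₀) (hp : p ∈ M.scc s₀)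
    {w : List Bool} (hw : w ∈ M.spineBlock s₀ d p) : w.head? ≠ some !d := by
  obtain ⟨⟨-, hexit⟩, hd⟩ := hw
  rcases w with _ | ⟨b, w⟩
  · simp
  · rintro ⟨⟩
    exact hexit _ w rfl (hcyc.childIn_not_of_not hp hd)

lemma IsBranching.eq_nil_of_mem_exitLang (hq : M.IsBranching s₀ q) {k : List Bool}
    (hk : k ∈ M.exitLang s₀ q) : k = [] := by
  rcases k with _ | ⟨b, k⟩
  · rfl
  · exact absurd (hq b) (hk.2 b k rfl)

lemma mem_nodeLang_iff {k : List Bool} : k ∈ M.nodeLang s₀ q ↔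
    k ∈ M.exitLang s₀ q ∨ ∃ b, ∃ e ∈ M.spineLang s₀ (!b) (M.child s₀ q b), k = b :: e := by
  simp [nodeLang, eq_comm]

@[simp] lemma spinePath_zero : M.spinePath s₀ d p 0 = [] := rfl

lemma spinePath_succ (t : ℕ) :
    M.spinePath s₀ d p (t + 1) = M.spineLetter s₀ d p :: M.spinePath s₀ d (M.spineNext s₀ d p) t :=
  rfl

lemma spinePath_add (m k : ℕ) : M.spinePath s₀ d p (m + k) =
    M.spinePath s₀ d p m ++ M.spinePath s₀ d ((M.spineNext s₀ d)^[m] p) k := by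
  induction m generalizing p with
  | zero => simp
  | succ m ih => rw [Nat.add_right_comm, spinePath_succ, ih, spinePath_succ]; rfl

lemma spinePath_of_lt {t n : ℕ} (h : t < n) : M.spinePath s₀ d p n =
    M.spinePath s₀ d p t ++ M.spineLetter s₀ d ((M.spineNext s₀ d)^[t] p) ::
      M.spinePath s₀ d ((M.spineNext s₀ d)^[t + 1] p) (n - t - 1) := by
  obtain ⟨k, rfl⟩ : ∃ k, n = t + 1 + k := ⟨n - t - 1, by omega⟩
  rw [show t + 1 + k - t - 1 = k by omega, spinePath_add, spinePath_add t 1]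
  simp [spinePath_succ]

lemma IsCyclic.run_spinePath (hcyc : M.IsCyclic s₀) (hp : p ∈ M.scc s₀) (t : ℕ) :
    M.run p (M.spinePath s₀ d p t) = some ((M.spineNext s₀ d)^[t] p) := by
  induction t generalizing p with
  | zero => rfl
  | succ t ih =>
    rw [spinePath_succ, run_cons, hcyc.step_spineLetter hp, Option.bind_some,
      Function.iterate_succ_apply]
    exact ih (hcyc.spineNext_mem hp)

lemma spineAt_add (m t : ℕ) : M.spineAt s₀ d p (m + t) =
    (M.spinePath s₀ d p m ++ ·) '' M.spineAt s₀ d ((M.spineNext s₀ d)^[m] p) t := by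
  simp only [spineAt, Set.image_image, spinePath_add, List.append_assoc]
  rw [← Function.iterate_add_apply, Nat.add_comm]

lemma spineAt_succ (t : ℕ) : M.spineAt s₀ d p (t + 1) =
    (M.spineLetter s₀ d p :: ·) '' M.spineAt s₀ d (M.spineNext s₀ d p) t := by
  simp only [spineAt, Set.image_image, spinePath_succ, List.cons_append,
    Function.iterate_succ_apply]

@[simp] lemma spineAt_zero : M.spineAt s₀ d p 0 = M.spineBlock s₀ d p := by
  simp [spineAt]

lemma mem_spineLang_iff {w : List Bool} : w ∈ M.spineLang s₀ d p ↔
    w ∈ M.spineBlock s₀ d p ∨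
      ∃ w' ∈ M.spineLang s₀ d (M.spineNext s₀ d p), w = M.spineLetter s₀ d p :: w' := by
  simp only [spineLang, Set.mem_iUnion]
  constructor
  · rintro ⟨_ | t, hw⟩
    · exact Or.inl (by simpa using hw)
    · rw [spineAt_succ] at hw
      obtain ⟨w', hw', rfl⟩ := hw
      exact Or.inr ⟨w', ⟨t, hw'⟩, rfl⟩
  · rintro (hw | ⟨w', ⟨t, hw'⟩, rfl⟩)
    · exact ⟨0, by simpa using hw⟩
    · exact ⟨t + 1, by rw [spineAt_succ]; exact ⟨w', hw', rfl⟩⟩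

lemma IsCyclic.inltTo_of_mem_spineAt (hcyc : M.IsCyclic s₀) (hp : p ∈ M.scc s₀) {t n : ℕ}
    (h : t < n) {x : List Bool} (hx : x ∈ M.spineAt s₀ d p t) (z : List Bool) :
    inltTo d x (M.spinePath s₀ d p n ++ z) := by
  obtain ⟨b, hb, rfl⟩ := hx
  rw [spinePath_of_lt h, List.append_assoc, inltTo_append_left_iff,
    spineLetter_of_not_childIn hb.2]
  exact inltTo_of_head?_eq_not d (hcyc.head?_ne_of_mem_spineBlock
    (hcyc.iterate_spineNext_mem hp t) hb) rfl

lemma IsCyclic.inltTo_of_mem_spineLang (hcyc : M.IsCyclic s₀) (hp : p ∈ M.scc s₀)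
    {x y : List Bool} (hx : x ∈ M.spineLang s₀ d p) (hy : y ∈ M.spineLang s₀ (!d) p) :
    inltTo d x y := by
  obtain ⟨t, hxt⟩ := Set.mem_iUnion.1 hx
  clear hx
  induction t generalizing p x y with
  | zero =>
    rw [spineAt_zero] at hxt
    rcases mem_spineLang_iff.1 hy with hy | ⟨y, -, rfl⟩
    · exact absurd (hcyc.childIn_not_of_not hp hxt.2) (by simpa using hy.2)
    · rw [spineLetter_of_childIn (hcyc.childIn_not_of_not hp hxt.2)]
      exact inltTo_of_head?_eq_not d (hcyc.head?_ne_of_mem_spineBlock hp hxt) rfl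
  | succ t ih =>
    rw [spineAt_succ] at hxt
    obtain ⟨x, hx, rfl⟩ := hxt
    dsimp only
    rcases mem_spineLang_iff.1 hy with hyb | ⟨y, hy', rfl⟩
    · have hd : M.ChildIn s₀ p d := by simpa using hcyc.childIn_not_of_not hp hyb.2
      rw [spineLetter_of_childIn hd]
      exact inltTo_of_head?_eq d rfl (by simpa using hcyc.head?_ne_of_mem_spineBlock hp hyb)
    · by_cases heq : M.spineLetter s₀ d p = M.spineLetter s₀ (!d) p
      · have hnext : M.spineNext s₀ d p = M.spineNext s₀ (!d) p := by simp [spineNext, heq]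
        rw [← hnext] at hy'
        rw [heq, inltTo_cons_cons_iff]
        exact ih (hcyc.spineNext_mem hp) hy' hx
      · have hd : M.ChildIn s₀ p d := by
          by_contra hd
          rw [spineLetter_of_not_childIn hd,
            spineLetter_of_childIn (hcyc.childIn_not_of_not hp hd)] at heq
          exact heq rfl
        rw [spineLetter_of_childIn hd] at heq ⊢
        exact inltTo_of_head?_eq d rfl (by simpa [eq_comm] using heq)

lemma IsCyclic.inltTo_of_mem_spineLang_of_mem_nodeLang (hcyc : M.IsCyclic s₀)
    (hp : p ∈ M.scc s₀) {v : List Bool} (hrun : M.run p v = some q) (hq : q ∈ M.scc s₀)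
    (hbr : M.IsBranching s₀ q) {x k : List Bool} (hx : x ∈ M.spineLang s₀ d p)
    (hk : k ∈ M.nodeLang s₀ q) : inltTo d x (v ++ k) := by
  induction v generalizing p x with
  | nil =>
    obtain rfl := Option.some.inj hrun
    rcases mem_spineLang_iff.1 hx with hxb | ⟨x, hx', rfl⟩
    · exact absurd (hbr d) hxb.2
    rw [spineLetter_of_childIn (hbr d), List.nil_append]
    rw [spineNext_of_childIn (hbr d)] at hx'
    rcases mem_nodeLang_iff.1 hk with hk | ⟨b, e, he, rfl⟩
    · rw [hbr.eq_nil_of_mem_exitLang hk]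
      exact inltTo_of_head?_eq d rfl (by simp)
    · by_cases hb : b = d
      · subst hb
        rw [inltTo_cons_cons_iff]
        exact hcyc.inltTo_of_mem_spineLang (hbr b).child_mem hx' he
      · exact inltTo_of_head?_eq d rfl (by simpa using hb)
  | cons b v ih =>
    rw [run_cons, Option.bind_eq_some_iff] at hrun
    obtain ⟨r, hstep, hrun⟩ := hrun
    have hr := mem_scc_of_step hp hstep hrun hq
    rcases mem_spineLang_iff.1 hx with hxb | ⟨x, hx', rfl⟩
    · have hb : b = !d := by
        rcases spineLetter_eq_or (d := d) (childIn_of_step hstep hr) with h | ⟨h, -⟩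
        · rw [← h, spineLetter_of_not_childIn hxb.2]
        · exact absurd h hxb.2
      exact inltTo_of_head?_eq_not d (hcyc.head?_ne_of_mem_spineBlock hp hxb) (by simp [hb])
    · rcases spineLetter_eq_or (d := d) (childIn_of_step hstep hr) with hl | ⟨hd, rfl⟩
      · rw [spineNext, hl, child_eq_of_step hstep hr] at hx'
        rw [hl, List.cons_append, inltTo_cons_cons_iff]
        exact ih hr hrun hx'
      · rw [spineLetter_of_childIn hd]
        exact inltTo_of_head?_eq d rfl (by simp)

lemma IsCyclic.inlt_append_of_mem_nodeLang (hcyc : M.IsCyclic s₀) (hp : p ∈ M.scc s₀)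
    {v v' : List Bool} (hv : inlt v v') {q' : M.State}
    (hrun : M.run p v = some q) (hq : q ∈ M.scc s₀) (hbr : M.IsBranching s₀ q)
    (hrun' : M.run p v' = some q') (hq' : q' ∈ M.scc s₀) (hbr' : M.IsBranching s₀ q')
    {k k' : List Bool} (hk : k ∈ M.nodeLang s₀ q) (hk' : k' ∈ M.nodeLang s₀ q') :
    inlt (v ++ k) (v' ++ k') := by
  induction v generalizing p v' with
  | nil =>
    obtain rfl := Option.some.inj hrun
    rcases v' with _ | ⟨b', v'⟩
    · simp at hv
    simp only [inlt_nil_cons] at hv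
    subst hv
    rw [run_cons, Option.bind_eq_some_iff] at hrun'
    obtain ⟨r, hstep, hrun'⟩ := hrun'
    have hr := mem_scc_of_step hp hstep hrun' hq'
    rcases mem_nodeLang_iff.1 hk with hk | ⟨b, e, he, rfl⟩
    · simp [hbr.eq_nil_of_mem_exitLang hk]
    · cases b
      · simp
      · rw [child_eq_of_step hstep hr] at he
        simpa using hcyc.inltTo_of_mem_spineLang_of_mem_nodeLang hr hrun' hq' hbr' he hk'
  | cons b v ih =>
    rw [run_cons, Option.bind_eq_some_iff] at hrun
    obtain ⟨r, hstep, hrun⟩ := hrun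
    have hr := mem_scc_of_step hp hstep hrun hq
    rcases v' with _ | ⟨b', v'⟩
    · obtain rfl := Option.some.inj hrun'
      simp only [inlt_cons_nil] at hv
      subst hv
      rcases mem_nodeLang_iff.1 hk' with hk' | ⟨b', e', he', rfl⟩
      · simp [hbr'.eq_nil_of_mem_exitLang hk']
      · cases b'
        · rw [child_eq_of_step hstep hr] at he'
          simpa using hcyc.inltTo_of_mem_spineLang_of_mem_nodeLang hr hrun hq hbr he' hk
        · simp
    · rcases hv with ⟨rfl, rfl⟩ | ⟨rfl, hv⟩
      · simp
      · rw [run_cons, hstep, Option.bind_some] at hrun'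
        simpa using ih hr hv hrun hrun'

lemma not_childIn_of_step (h : M.step p b = some r) (hr : r ∉ M.scc s₀) : ¬ M.ChildIn s₀ p b := by
  rintro ⟨r', hr', h'⟩
  exact hr (Option.some.inj (h.symm.trans h') ▸ hr')

lemma IsCyclic.spineLang_subset (hcyc : M.IsCyclic s₀) (hp : p ∈ M.scc s₀) :
    M.spineLang s₀ d p ⊆ M.langFrom p := by
  intro w hw
  obtain ⟨t, b, hb, rfl⟩ := Set.mem_iUnion.1 hw
  rw [append_mem_langFrom (hcyc.run_spinePath hp t)]
  exact hb.1.1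

lemma IsCyclic.nodeLang_subset (hcyc : M.IsCyclic s₀) (hq : M.IsBranching s₀ q) :
    M.nodeLang s₀ q ⊆ M.langFrom q := by
  intro k hk
  rcases mem_nodeLang_iff.1 hk with hk | ⟨b, e, he, rfl⟩
  · exact hk.1
  · exact cons_mem_langFrom.2 ⟨_, (hq b).step_child, hcyc.spineLang_subset (hq b).child_mem he⟩

lemma IsCyclic.midLang_subset (hcyc : M.IsCyclic s₀) : M.midLang s₀ p ⊆ M.langFrom p := by
  rintro _ ⟨v, q, hrun, -, hbr, k, hk, rfl⟩
  rw [append_mem_langFrom hrun]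
  exact hcyc.nodeLang_subset hbr hk

lemma mem_spineLang_or_mem_midLang (hp : p ∈ M.scc s₀)
    {w : List Bool} (hw : w ∈ M.langFrom p) :
    (∃ d, w ∈ M.spineLang s₀ d p) ∨ w ∈ M.midLang s₀ p := by
  induction w generalizing p with
  | nil =>
    by_cases hbr : M.IsBranching s₀ p
    · exact Or.inr ⟨[], p, rfl, hp, hbr, [], Or.inl ⟨hw, by simp⟩, rfl⟩
    · obtain ⟨d, hd⟩ := not_forall.1 hbr
      exact Or.inl ⟨d, Set.mem_iUnion.2 ⟨0, by simpa using ⟨⟨hw, by simp⟩, hd⟩⟩⟩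
  | cons a w ih =>
    obtain ⟨r, hstep, hw⟩ := cons_mem_langFrom.1 hw
    by_cases hr : r ∈ M.scc s₀
    · rcases ih hr hw with ⟨d, hd⟩ | ⟨v, q, hrun, hq, hbr, k, hk, rfl⟩
      · rcases spineLetter_eq_or (d := d) (childIn_of_step hstep hr) with hl | ⟨hpd, rfl⟩
        · refine Or.inl ⟨d, mem_spineLang_iff.2 (Or.inr ⟨w, ?_, by rw [hl]⟩)⟩
          rwa [spineNext, hl, child_eq_of_step hstep hr]
        · have hpnd := childIn_of_step hstep hr
          have hbr : M.IsBranching s₀ p := fun b => by cases b <;> cases d <;> simp_all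
          refine Or.inr ⟨[], p, rfl, hp, hbr, (!d) :: w, ?_, rfl⟩
          refine mem_nodeLang_iff.2 (Or.inr ⟨!d, w, ?_, rfl⟩)
          rwa [child_eq_of_step hstep hr, Bool.not_not]
      · exact Or.inr ⟨a :: v, q, by simp [hstep, hrun], hq, hbr, k, hk, rfl⟩
    · refine Or.inl ⟨a, Set.mem_iUnion.2 ⟨0, ?_⟩⟩
      rw [spineAt_zero]
      have ha := not_childIn_of_step (s₀ := s₀) hstep hr
      exact ⟨⟨cons_mem_langFrom.2 ⟨r, hstep, hw⟩, by simpa using ha⟩, ha⟩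

lemma spinePath_mul {k : ℕ} (hper : Function.IsPeriodicPt (M.spineNext s₀ d) k p) (m : ℕ) :
    M.spinePath s₀ d p (m * k) = (List.replicate m (M.spinePath s₀ d p k)).flatten := by
  induction m with
  | zero => simp
  | succ m ih =>
    rw [Nat.succ_mul, Nat.add_comm, spinePath_add, hper.eq, ih, List.replicate_succ,
      List.flatten_cons]

lemma spineAt_mul_add {k : ℕ} (hper : Function.IsPeriodicPt (M.spineNext s₀ d) k p)
    (m j : ℕ) : M.spineAt s₀ d p (m * k + j) =
      ((List.replicate m (M.spinePath s₀ d p k)).flatten ++ ·) '' M.spineAt s₀ d p j := by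
  rw [spineAt_add, spinePath_mul hper, (hper.const_mul m).eq]

lemma spineLang_eq_union (n : ℕ) : M.spineLang s₀ d p =
    (⋃ t < n, M.spineAt s₀ d p t) ∪
      (M.spinePath s₀ d p n ++ ·) '' M.spineLang s₀ d ((M.spineNext s₀ d)^[n] p) := by
  ext w
  simp only [spineLang, Set.image_iUnion, ← spineAt_add, Set.mem_union, Set.mem_iUnion]
  constructor
  · rintro ⟨t, ht⟩
    by_cases htn : t < n
    · exact Or.inl ⟨t, htn, ht⟩
    · exact Or.inr ⟨t - n, by rwa [Nat.add_sub_cancel' (not_lt.1 htn)]⟩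
  · rintro (⟨t, -, ht⟩ | ⟨t, ht⟩)
    exacts [⟨t, ht⟩, ⟨n + t, ht⟩]

lemma finDescLang_spineBlock (hexit : ∀ p ∈ M.scc s₀, FinDescLang (M.exitLang s₀ p))
    (hp : p ∈ M.scc s₀) : FinDescLang (M.spineBlock s₀ d p) := by
  by_cases hd : M.ChildIn s₀ p d
  · exact .of_eq_empty (by ext; simp [spineBlock, hd])
  · exact (hexit p hp).congr (by ext; simp [spineBlock, hd])

lemma IsCyclic.finDescLang_biUnion_spineAt (hcyc : M.IsCyclic s₀)
    (hexit : ∀ p ∈ M.scc s₀, FinDescLang (M.exitLang s₀ p)) (hp : p ∈ M.scc s₀) (n : ℕ) :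
    FinDescLang (⋃ t < n, M.spineAt s₀ d p t) := by
  induction n with
  | zero => exact .of_eq_empty (by simp)
  | succ n ih =>
    rw [Set.biUnion_lt_succ]
    refine ih.union_to d (.image_append _
      (finDescLang_spineBlock hexit (hcyc.iterate_spineNext_mem hp n))) ?_
    rintro x hx _ ⟨b, -, rfl⟩
    obtain ⟨t, ht, hx⟩ := Set.mem_iUnion₂.1 hx
    exact hcyc.inltTo_of_mem_spineAt hp ht hx b

lemma IsCyclic.finDescLang_spineLang_of_isPeriodicPt (hcyc : M.IsCyclic s₀)
    (hexit : ∀ p ∈ M.scc s₀, FinDescLang (M.exitLang s₀ p)) (hp : p ∈ M.scc s₀) {k : ℕ}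
    (hk : 0 < k) (hper : Function.IsPeriodicPt (M.spineNext s₀ d) k p) :
    FinDescLang (M.spineLang s₀ d p) := by
  refine (FinDescLang.iterate d (M.spinePath s₀ d p k)
    (hcyc.finDescLang_biUnion_spineAt (d := d) hexit hp k) ?_).congr ?_
  · intro v hv y
    obtain ⟨t, ht, hv⟩ := Set.mem_iUnion₂.1 hv
    exact hcyc.inltTo_of_mem_spineAt hp ht hv y
  · ext w
    simp only [spineLang, Set.mem_iUnion, Set.mem_ofPred_eq]
    constructor
    · rintro ⟨m, v, ⟨t, ht, hv⟩, rfl⟩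
      exact ⟨m * k + t, by rw [spineAt_mul_add hper]; exact ⟨v, hv, rfl⟩⟩
    · rintro ⟨t, ht⟩
      rw [← Nat.div_add_mod t k, Nat.mul_comm, spineAt_mul_add hper] at ht
      obtain ⟨v, hv, rfl⟩ := ht
      exact ⟨t / k, v, ⟨t % k, Nat.mod_lt t hk, hv⟩, rfl⟩

lemma IsCyclic.finDescLang_spineLang (hcyc : M.IsCyclic s₀)
    (hexit : ∀ p ∈ M.scc s₀, FinDescLang (M.exitLang s₀ p)) (hp : p ∈ M.scc s₀) :
    FinDescLang (M.spineLang s₀ d p) := by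
  have := M.finState
  obtain ⟨i, j, hij, heq⟩ := Set.finite_univ.exists_lt_map_eq_of_forall_mem
    (f := fun t => (M.spineNext s₀ d)^[t] p) (fun _ => Set.mem_univ _)
  have hper : Function.IsPeriodicPt (M.spineNext s₀ d) (j - i) ((M.spineNext s₀ d)^[i] p) := by
    simp only [Function.IsPeriodicPt, Function.IsFixedPt, ← Function.iterate_add_apply,
      Nat.sub_add_cancel hij.le]
    exact heq.symm
  rw [spineLang_eq_union i]
  refine (hcyc.finDescLang_biUnion_spineAt hexit hp i).union_to d (.image_append _
    (hcyc.finDescLang_spineLang_of_isPeriodicPt hexit (hcyc.iterate_spineNext_mem hp i)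
      (Nat.sub_pos_of_lt hij) hper)) ?_
  rintro x hx _ ⟨y, -, rfl⟩
  obtain ⟨t, ht, hx⟩ := Set.mem_iUnion₂.1 hx
  exact hcyc.inltTo_of_mem_spineAt hp ht hx y

lemma IsCyclic.finDescLang_nodeLang (hcyc : M.IsCyclic s₀)
    (hexit : ∀ p ∈ M.scc s₀, FinDescLang (M.exitLang s₀ p)) (hbr : M.IsBranching s₀ q) :
    FinDescLang (M.nodeLang s₀ q) := by
  have hchild : ∀ b, FinDescLang (([b] ++ ·) '' M.spineLang s₀ (!b) (M.child s₀ q b)) :=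
    fun b => .image_append _ (hcyc.finDescLang_spineLang hexit (hbr b).child_mem)
  have hnil : FinDescLang (M.exitLang s₀ q) :=
    .of_subset_singleton fun _ hk => hbr.eq_nil_of_mem_exitLang hk
  refine ((hchild false).union (hnil.union (hchild true) ?_) ?_).congr ?_
  · rintro x hx _ ⟨y, -, rfl⟩
    rw [hbr.eq_nil_of_mem_exitLang hx]
    simp
  · rintro _ ⟨x, -, rfl⟩ y (hy | ⟨y, -, rfl⟩)
    · simp [hbr.eq_nil_of_mem_exitLang hy]
    · simp
  · ext w
    simp only [nodeLang, Set.mem_union, Set.mem_iUnion, Bool.exists_bool]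
    simp only [List.singleton_append]
    tauto

lemma exists_run_append_cons {v : List Bool} (hv : M.run s₀ v = some q)
    (hbr : M.IsBranching s₀ q) (e : Bool) {q' : M.State} (hq' : q' ∈ M.scc s₀) :
    ∃ t, M.run s₀ (v ++ e :: t) = some q' := by
  obtain ⟨t, ht⟩ := exists_run_of_mem_scc (hbr e).child_mem hq'
  exact ⟨t, by simp [run_append, hv, (hbr e).step_child, ht]⟩

lemma exists_run_between {a b : List Bool} (hab : inlt a b) {qa qb : M.State}
    (ha : M.run s₀ a = some qa) (hqa : M.IsBranching s₀ qa)
    (hb : M.run s₀ b = some qb) (hqb : M.IsBranching s₀ qb) (hq : q ∈ M.scc s₀) :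
    ∃ m, inlt a m ∧ inlt m b ∧ M.run s₀ m = some q := by
  obtain ⟨c, hc, e, hce⟩ := inlt_exists_extension_between hab
  obtain ⟨t, ht⟩ : ∃ t, M.run s₀ (c ++ e :: t) = some q := by
    rcases hc with rfl | rfl
    exacts [exists_run_append_cons ha hqa e hq, exists_run_append_cons hb hqb e hq]
  exact ⟨_, (hce t).1, (hce t).2, ht⟩

lemma exists_run_lt {a : List Bool} (ha : M.run s₀ a = some r) (hr : M.IsBranching s₀ r)
    (hq : q ∈ M.scc s₀) : ∃ m, inlt m a ∧ M.run s₀ m = some q := by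
  obtain ⟨t, ht⟩ := exists_run_append_cons ha hr false hq
  exact ⟨_, inlt_append_false a t, ht⟩

lemma exists_run_gt {a : List Bool} (ha : M.run s₀ a = some r) (hr : M.IsBranching s₀ r)
    (hq : q ∈ M.scc s₀) : ∃ m, inlt a m ∧ M.run s₀ m = some q := by
  obtain ⟨t, ht⟩ := exists_run_append_cons ha hr true hq
  exact ⟨_, inlt_append_true a t, ht⟩

lemma IsCyclic.finDescLang_midLang (hcyc : M.IsCyclic s₀)
    (hexit : ∀ p ∈ M.scc s₀, FinDescLang (M.exitLang s₀ p)) :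
    FinDescLang (M.midLang s₀ s₀) := by
  by_cases hB : ∃ q ∈ M.scc s₀, M.IsBranching s₀ q
  swap
  · exact .of_eq_empty (Set.eq_empty_of_forall_notMem
      fun _ ⟨_, q, _, hq, hbr, _⟩ => hB ⟨q, hq, hbr⟩)
  obtain ⟨q₀, hq₀⟩ := hB
  have := M.finState
  let B := {q | q ∈ M.scc s₀ ∧ M.IsBranching s₀ q}
  let J := {v : InorderWord // ∃ q, M.run s₀ v = some q ∧ q ∈ B}
  let c : J → B := fun v => ⟨v.2.choose, v.2.choose_spec.2⟩
  have hc : ∀ v : J, M.run s₀ v.1 = some (c v).1 := fun v => v.2.choose_spec.1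
  have hc_eq : ∀ (i : B) (v : List Bool) (hv : M.run s₀ v = some i), c ⟨v, i, hv, i.2⟩ = i :=
    fun i v hv => Subtype.ext (Option.some.inj ((hc ⟨v, i, hv, i.2⟩).symm.trans hv))
  have hdense : ∀ i, ∀ a b : J, a < b → ∃ m, a < m ∧ m < b ∧ c m = i := fun i a b hab => by
    obtain ⟨m, ham, hmb, hm⟩ :=
      exists_run_between hab (hc a) (c a).2.2 (hc b) (c b).2.2 i.2.1
    exact ⟨⟨m, i, hm, i.2⟩, ham, hmb, hc_eq i m hm⟩
  have : Nonempty J := by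
    obtain ⟨v, hv⟩ := exists_run_of_mem_scc mem_scc_self hq₀.1
    exact ⟨⟨v, q₀, hv, hq₀⟩⟩
  have : DenselyOrdered J := ⟨fun a b hab => by
    obtain ⟨m, h₁, h₂, -⟩ := hdense ⟨q₀, hq₀⟩ a b hab
    exact ⟨m, h₁, h₂⟩⟩
  have : NoMinOrder J := ⟨fun a => by
    obtain ⟨m, hm, hrun⟩ := exists_run_lt (hc a) (c a).2.2 hq₀.1
    exact ⟨⟨m, q₀, hrun, hq₀⟩, hm⟩⟩
  have : NoMaxOrder J := ⟨fun a => by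
    obtain ⟨m, hm, hrun⟩ := exists_run_gt (hc a) (c a).2.2 hq₀.1
    exact ⟨⟨m, q₀, hrun, hq₀⟩, hm⟩⟩
  refine (FinDescLang.shuffle (fun i : B => M.nodeLang s₀ i.1)
    (fun i => hcyc.finDescLang_nodeLang hexit i.2.2) c hdense (fun v : J => (v.1 : List Bool))
    fun a b hab k hk k' hk' => hcyc.inlt_append_of_mem_nodeLang mem_scc_self hab (hc a)
      (c a).2.1 (c a).2.2 (hc b) (c b).2.1 (c b).2.2 hk hk').congr ?_
  ext w
  constructor
  · rintro ⟨v, k, hk, rfl⟩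
    exact ⟨v.1, (c v).1, hc v, (c v).2.1, (c v).2.2, k, hk, rfl⟩
  · rintro ⟨v, q, hv, hq, hbr, k, hk, rfl⟩
    exact ⟨⟨v, q, hv, hq, hbr⟩, k, by rwa [hc_eq ⟨q, hq, hbr⟩ v hv], rfl⟩

lemma IsCyclic.langFrom_eq_union (hcyc : M.IsCyclic s₀) : M.langFrom s₀ =
    M.spineLang s₀ false s₀ ∪ (M.midLang s₀ s₀ ∪ M.spineLang s₀ true s₀) := by
  ext w
  constructor
  · intro hw
    rcases mem_spineLang_or_mem_midLang mem_scc_self hw with ⟨_ | _, hd⟩ | hmid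
    exacts [Or.inl hd, Or.inr (Or.inr hd), Or.inr (Or.inl hmid)]
  · rintro (h | h | h)
    exacts [hcyc.spineLang_subset mem_scc_self h, hcyc.midLang_subset h,
      hcyc.spineLang_subset mem_scc_self h]

lemma IsCyclic.finDescLang_langFrom (hcyc : M.IsCyclic s₀)
    (hexit : ∀ p ∈ M.scc s₀, FinDescLang (M.exitLang s₀ p)) :
    FinDescLang (M.langFrom s₀) := by
  rw [hcyc.langFrom_eq_union]
  refine (hcyc.finDescLang_spineLang hexit mem_scc_self).union
    ((hcyc.finDescLang_midLang hexit).union (hcyc.finDescLang_spineLang hexit mem_scc_self) ?_) ?_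
  · rintro _ ⟨v, q, hv, hq, hbr, k, hk, rfl⟩ y hy
    exact hcyc.inltTo_of_mem_spineLang_of_mem_nodeLang (d := true) mem_scc_self hv hq hbr hy hk
  · rintro x hx y (⟨v, q, hv, hq, hbr, k, hk, rfl⟩ | hy)
    · exact hcyc.inltTo_of_mem_spineLang_of_mem_nodeLang mem_scc_self hv hq hbr hx hk
    · exact hcyc.inltTo_of_mem_spineLang mem_scc_self hx hy

theorem finDescLang_langFrom (s : M.State) : FinDescLang (M.langFrom s) := by
  by_cases hcyc : M.IsCyclic s
  · refine hcyc.finDescLang_langFrom fun p hp =>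
      finDescLang_of_children p _ fun b r hb hstep => ?_
    have hr : r ∈ M.reach s := mem_reach_trans hp.1 (mem_reach_of_step hstep)
    have hs : s ∉ M.reach r := fun hs => hb (childIn_of_step hstep ⟨hr, hs⟩)
    have := ncard_reach_lt hr hs
    exact finDescLang_langFrom r
  · refine (finDescLang_of_children s (fun _ => True) fun b r _ hstep => ?_).congr (by simp)
    have hs : s ∉ M.reach r := fun ⟨w, hw⟩ => hcyc ⟨b :: w, by simp, by simp [hstep, hw]⟩
    have := ncard_reach_lt (mem_reach_of_step hstep) hs
    exact finDescLang_langFrom r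
termination_by (M.reach s).ncard

end PDFA

/-- For every deterministic finite automaton `M` over `{0,1}`,
the linguage `𝐋(M) = (L(M), <₂)` is a finite description linear order. -/
theorem linguage_finDesc (M : PDFA Bool) :
    FinDesc {w : List Bool // w ∈ M.lang} (fun x y => inlt x.1 y.1) :=
  M.finDescLang_langFrom M.start
end

section
/- If a linear order L is order-isomorphic to the linguage of a deterministic finite automaton over {0,1}, then so is L·ω* := Σ_{n ∈ ω*} L, the reverse-ω-indexed sum of copies of L (i.e. countably many copies of L arranged in the order type of the negative integers). -/
/-- `(L, r)` is order-isomorphic to the linguage `(L(M), <₂)` of some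
deterministic finite automaton `M` over `{0,1}`. -/
def IsLinguageOf (L : Type) (r : L → L → Prop) : Prop :=
  ∃ M : PDFA Bool, Nonempty (r ≃r fun x y : M.lang => inlt x.1 y.1)

/-! Encode the element `(n, w)` of `L(M)·ω*` by the word `0ⁿ1w`. Under `<₂` the block `0ⁿ1`
is compared first and a longer run of zeros is smaller, so `0ᵐ1v <₂ 0ⁿ1w` iff `n < m`, or
`m = n` and `v <₂ w`: exactly the reverse-lexicographic order of `ω* × L(M)`. These words are
the language of the automaton that loops on `0` in a fresh start state and enters `M` on `1`. -/

def blockWord (n : ℕ) (w : List Bool) : List Bool :=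
  List.replicate n false ++ true :: w

theorem blockWord_inj {m n : ℕ} {v w : List Bool} :
    blockWord m v = blockWord n w ↔ m = n ∧ v = w := by
  induction m generalizing n with
  | zero => cases n <;> simp [blockWord, List.replicate_succ]
  | succ m ih => cases n <;> simp [blockWord, List.replicate_succ, ← ih]

theorem inlt_cons_self (a : Bool) (v w : List Bool) : inlt (a :: v) (a :: w) ↔ inlt v w := by
  cases a <;> simp [inlt]

theorem inlt_blockWord_iff (m n : ℕ) (v w : List Bool) :
    inlt (blockWord m v) (blockWord n w) ↔ n < m ∨ m = n ∧ inlt v w := by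
  induction m generalizing n with
  | zero => cases n <;> simp [blockWord, List.replicate_succ, inlt]
  | succ m ih =>
    cases n with
    | zero => simp [blockWord, List.replicate_succ, inlt]
    | succ n => simpa [blockWord, List.replicate_succ, inlt_cons_self] using ih n

namespace PDFA

theorem run_cons_s5 {σ : Type} (M : PDFA σ) (q : M.State) (a : σ) (w : List σ) :
    M.run q (a :: w) = M.step q a >>= fun q' => M.run q' w := by
  simp [run, List.foldlM]

-- Reducible, so that `M.omegaStar.State` is seen as `Option M.State` when rewriting.
abbrev omegaStar (M : PDFA Bool) : PDFA Bool where
  State := Option M.State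
  finState := have := M.finState; inferInstance
  start := none
  accept := some '' M.accept
  step
    | none, b => some (if b then some M.start else none)
    | some q, b => (M.step q b).map some

variable (M : PDFA Bool)

theorem omegaStar_run_some (q : M.State) (w : List Bool) :
    M.omegaStar.run (some q) w = (M.run q w).map some := by
  induction w generalizing q with
  | nil => rfl
  | cons a w ih =>
    rw [run_cons_s5, run_cons_s5]
    cases h : M.step q a <;> simp [omegaStar, h, ih]

theorem omegaStar_run_none_false (w : List Bool) :
    M.omegaStar.run none (false :: w) = M.omegaStar.run none w := by
  simp [run_cons_s5, omegaStar]

theorem omegaStar_run_none_true (w : List Bool) :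
    M.omegaStar.run none (true :: w) = (M.run M.start w).map some := by
  simp [run_cons_s5, omegaStar, omegaStar_run_some]

theorem omegaStar_run_blockWord (n : ℕ) (w : List Bool) :
    M.omegaStar.run none (blockWord n w) = (M.run M.start w).map some := by
  induction n with
  | zero => exact omegaStar_run_none_true M w
  | succ n ih => rwa [blockWord, List.replicate_succ, List.cons_append, omegaStar_run_none_false]

theorem exists_blockWord_of_omegaStar_run_none {x : List Bool} {q : M.State}
    (h : M.omegaStar.run none x = some (some q)) :
    ∃ n w, blockWord n w = x ∧ M.run M.start w = some q := by
  induction x with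
  | nil => cases h
  | cons a x ih =>
    cases a with
    | false =>
      obtain ⟨n, w, rfl, hw⟩ := ih (by rwa [omegaStar_run_none_false] at h)
      exact ⟨n + 1, w, rfl, hw⟩
    | true =>
      rw [omegaStar_run_none_true] at h
      exact ⟨0, x, rfl, by simpa using h⟩

theorem mem_omegaStar_lang {x : List Bool} :
    x ∈ M.omegaStar.lang ↔ ∃ n, ∃ w ∈ M.lang, blockWord n w = x := by
  constructor
  · rintro ⟨_, ⟨q, hq, rfl⟩, hx⟩
    obtain ⟨n, w, rfl, hw⟩ := M.exists_blockWord_of_omegaStar_run_none hx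
    exact ⟨n, w, ⟨q, hq, hw⟩, rfl⟩
  · rintro ⟨n, w, ⟨q, hq, hw⟩, rfl⟩
    exact ⟨some q, ⟨q, hq, rfl⟩, by simp [omegaStar, omegaStar_run_blockWord, hw]⟩

def omegaStarEmbedding :
    Prod.Lex (fun m n : ℕ => n < m) (fun x y : M.lang => inlt x.1 y.1) ↪r
      fun x y : M.omegaStar.lang => inlt x.1 y.1 where
  toFun p := ⟨blockWord p.1 p.2.1, M.mem_omegaStar_lang.2 ⟨p.1, p.2.1, p.2.2, rfl⟩⟩
  inj' p q h := by
    obtain ⟨h₁, h₂⟩ := blockWord_inj.1 (congrArg Subtype.val h)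
    exact Prod.ext h₁ (Subtype.ext h₂)
  map_rel_iff' {p q} := by
    rw [Prod.lex_def]
    exact inlt_blockWord_iff p.1 q.1 p.2 q.2

theorem omegaStarEmbedding_surjective : Function.Surjective M.omegaStarEmbedding := by
  rintro ⟨x, hx⟩
  obtain ⟨n, w, hw, rfl⟩ := M.mem_omegaStar_lang.1 hx
  exact ⟨(n, ⟨w, hw⟩), Subtype.ext rfl⟩

noncomputable def omegaStarRelIso :
    Prod.Lex (fun m n : ℕ => n < m) (fun x y : M.lang => inlt x.1 y.1) ≃r
      fun x y : M.omegaStar.lang => inlt x.1 y.1 :=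
  RelIso.ofSurjective M.omegaStarEmbedding M.omegaStarEmbedding_surjective

end PDFA

/-- If `L` is order-isomorphic to the linguage of a DFA over `{0,1}`,
then so is `L·ω* = Σ_{n ∈ ω*} L`, the reverse-`ω`-indexed sum of copies of `L`
(pairs `(n, a)` ordered by the natural number index `n` first, with the reverse order
on the indices). -/
theorem isLinguage_omegaStarMul (L : Type) (r : L → L → Prop) (h : IsLinguageOf L r) :
    IsLinguageOf (ℕ × L) (Prod.Lex (fun m n : ℕ => n < m) r) := by
  obtain ⟨M, ⟨e⟩⟩ := h
  exact ⟨M.omegaStar, ⟨(RelIso.prodLexCongr (RelIso.refl _) e).trans M.omegaStarRelIso⟩⟩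
end
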